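/- For any finite additive poset A, the height of A (the maximal length n of a chain a_0 < a_1 < ... < a_n) is at most the dimension of A as a ℤ/2ℤ-vector space. -/

import Mathlib

/-- An additive poset: an abelian group with a partial order satisfying
(∗): `b ≤ a → c ≤ a → b + c ≤ a` and (∗∗): `a ≤ b → a ≤ c → a ≤ a + b + c`. -/
class AdditivePoset (A : Type*) extends AddCommGroup A, PartialOrder A where
  add_le_of_le : ∀ a b c : A, b ≤ a → c ≤ a → b + c ≤ a
  le_add_add : ∀ a b c : A, a ≤ b → a ≤ c → a ≤ a + b + c

/-!
Each element `a` of an additive poset over `ZMod 2` lies above `0` (by (∗) applied to `a + a = 0`),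
so its down-set `Set.Iic a` is closed under addition and is a subspace. A strict chain
`c₀ < ⋯ < cₙ` therefore gives a strict chain of subspaces `Iic c₀ < ⋯ < Iic cₙ`, whose
dimensions increase strictly from `0` and are bounded by `dim A`.
-/

theorem Fin.val_le_of_strictMono {n : ℕ} {f : Fin (n + 1) → ℕ} (hf : StrictMono f)
    (i : Fin (n + 1)) : (i : ℕ) ≤ f i := by
  induction i using Fin.induction with
  | zero => exact Nat.zero_le _
  | succ i ih => simpa using ih.trans_lt (hf i.castSucc_lt_succ)

namespace AdditivePoset

variable {A : Type*} [AdditivePoset A] [Module (ZMod 2) A]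

theorem add_self_eq_zero (a : A) : a + a = 0 := by
  rw [← one_smul (ZMod 2) a, ← add_smul, CharTwo.add_self_eq_zero, zero_smul]

theorem zero_le (a : A) : 0 ≤ a :=
  add_self_eq_zero a ▸ add_le_of_le a a a le_rfl le_rfl

def iicSubmodule (a : A) : Submodule (ZMod 2) A where
  carrier := Set.Iic a
  add_mem' := add_le_of_le a _ _
  zero_mem' := zero_le a
  smul_mem' r x hx := by
    fin_cases r
    exacts [(zero_smul (ZMod 2) x).symm ▸ zero_le a, (one_smul (ZMod 2) x).symm ▸ hx]

theorem iicSubmodule_strictMono : StrictMono (iicSubmodule (A := A)) := fun _ _ hab =>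
  SetLike.coe_ssubset_coe.mp (Set.Iic_ssubset_Iic.mpr hab)

end AdditivePoset

open AdditivePoset Module in
theorem stmt17 {A : Type*} [AdditivePoset A] [Fintype A] [Module (ZMod 2) A]
    (n : ℕ) (c : Fin (n + 1) → A) (hc : StrictMono c) :
    n ≤ Module.finrank (ZMod 2) A := by
  have hdim : StrictMono fun i => finrank (ZMod 2) (iicSubmodule (c i)) :=
    Submodule.finrank_strictMono.comp (iicSubmodule_strictMono.comp hc)
  calc n = (Fin.last n : ℕ) := (Fin.val_last n).symm
    _ ≤ finrank (ZMod 2) (iicSubmodule (c (Fin.last n))) := Fin.val_le_of_strictMono hdim _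
    _ ≤ finrank (ZMod 2) A := Submodule.finrank_le _
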